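/- arXiv:1704.08592 — 2 statements merged into one kernel-verified Lean document; each statement's English description precedes it below -/
import Mathlib

section
/- Let t ∈ V and let y ∈ P_v(t) be a predecessor of t with respect to source v in G. Then S(t) ⊆ S(y), i.e., every affected source of t is also an affected source of y. -/
open scoped BigOperators

/-- A directed graph on vertex set `V` with positive real edge weights. -/
structure WDigraph (V : Type*) where
  /-- the edge relation -/
  E : V → V → Prop
  /-- the edge weights -/
  w : V → V → ℝ
  /-- weights of edges are positive -/
  pos : ∀ a b, E a b → 0 < w a b

namespace WDigraph

variable {V : Type*} [Fintype V] [DecidableEq V]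

/-- `p` is a simple path from `s` to `t` in `G`: a nonempty list of pairwise
distinct vertices starting at `s`, ending at `t`, consecutive vertices joined
by edges. (Since all weights are positive, every shortest path is simple, so
it suffices to consider simple paths throughout.) -/
def IsPath (G : WDigraph V) (s t : V) (p : List V) : Prop :=
  List.Chain' G.E p ∧ p.head? = some s ∧ p.getLast? = some t ∧ p.Nodup

/-- The total weight of a list of vertices (sum of the weights of consecutive pairs). -/
def pw (G : WDigraph V) : List V → ℝ
  | [] => 0
  | [_] => 0
  | a :: b :: r => G.w a b + G.pw (b :: r)

/-- `d(s,t)`: shortest-path distance from `s` to `t`, equal to `⊤` (infinity)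
if `t` is unreachable from `s`. -/
noncomputable def dist (G : WDigraph V) (s t : V) : EReal :=
  sInf ((fun p => (G.pw p : EReal)) '' {p | G.IsPath s t p})

/-- The set of shortest `s`-`t` paths in `G`. -/
def SP (G : WDigraph V) (s t : V) : Set (List V) :=
  {p | G.IsPath s t p ∧ (G.pw p : EReal) = G.dist s t}

/-- `σ_{st}`: the number of shortest `s`-`t` paths in `G`. -/
noncomputable def sigma (G : WDigraph V) (s t : V) : ℕ :=
  (G.SP s t).ncard

/-- `σ_{st}(v)`: the number of shortest `s`-`t` paths in `G` that contain `v`. -/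
noncomputable def sigmaV (G : WDigraph V) (s t v : V) : ℕ :=
  {p ∈ G.SP s t | v ∈ p}.ncard

/-- `σ_{st}(v,w)`: the number of shortest `s`-`t` paths in `G` using the edge `(v,w)`. -/
noncomputable def sigmaE (G : WDigraph V) (s t v w : V) : ℕ :=
  {p ∈ G.SP s t | [v, w] <:+: p}.ncard

/-- `P_s(t)`: the set of predecessors of `t` with respect to source `s`:
nodes `y` with `(y,t) ∈ E` and `d(s,y) + ω(y,t) = d(s,t) < ∞`. -/
def pred (G : WDigraph V) (s t : V) : Set V :=
  {y | G.E y t ∧ G.dist s y + (G.w y t : EReal) = G.dist s t ∧ G.dist s t < ⊤}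

/-- `δ_{s•}(v)`: Brandes's one-sided dependency of `s` on `v`
(a summand is `0` whenever its denominator is `0`, which is automatic since
in Lean division by zero yields zero). -/
noncomputable def delta (G : WDigraph V) (s v : V) : ℝ :=
  ∑ᶠ t ∈ {t : V | t ≠ s ∧ t ≠ v}, (G.sigmaV s t v : ℝ) / (G.sigma s t : ℝ)

/-- `c_B(v)`: the betweenness centrality of `v`. -/
noncomputable def bc (G : WDigraph V) (v : V) : ℝ :=
  ∑ᶠ s ∈ {s : V | s ≠ v}, G.delta s v

/-- `G'` is obtained from `G` by the incremental update `(u, v, ω'(u,v))`: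
either a new edge `(u,v) ∉ E` is inserted with positive weight, or the weight
of the existing edge `(u,v)` is decreased; all other edges and weights are
unchanged. (Positivity of all weights is part of the `WDigraph` structure.) -/
structure IsUpdate (G G' : WDigraph V) (u v : V) : Prop where
  /-- the updated edge is present in `G'` -/
  edge' : G'.E u v
  /-- `E' = E ∪ {(u,v)}` -/
  edge_iff : ∀ a b, G'.E a b ↔ G.E a b ∨ a = u ∧ b = v
  /-- `ω'` agrees with `ω` on all edges other than `(u,v)` -/
  weight_eq : ∀ a b, ¬(a = u ∧ b = v) → G'.w a b = G.w a b
  /-- either an insertion of a new edge, or a weight decrease of an existing one -/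
  insert_or_decrease : ¬ G.E u v ∨ (G.E u v ∧ G'.w u v < G.w u v)

/-- `S(t)`: the affected sources of `t`. -/
def affS (G G' : WDigraph V) (t : V) : Set V :=
  {s | G.dist s t > G'.dist s t ∨ G.sigma s t ≠ G'.sigma s t}

/-- `T(s)`: the affected targets of `s`. -/
def affT (G G' : WDigraph V) (s : V) : Set V :=
  {t | G.dist s t > G'.dist s t ∨ G.sigma s t ≠ G'.sigma s t}

/-- `Δ_{s•}(v) = Σ_{t ∈ T(s), t ≠ v} σ_{st}(v)/σ_{st}`, computed in `G`
(`0`-convention for zero denominators). -/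
noncomputable def Delta (G G' : WDigraph V) (s v : V) : ℝ :=
  ∑ᶠ t ∈ {t : V | t ∈ affT G G' s ∧ t ≠ v}, (G.sigmaV s t v : ℝ) / (G.sigma s t : ℝ)

/-- `Δ'_{s•}(v) = Σ_{t ∈ T(s), t ≠ v} σ'_{st}(v)/σ'_{st}`, computed in `G'`
(`0`-convention for zero denominators). -/
noncomputable def Delta' (G G' : WDigraph V) (s v : V) : ℝ :=
  ∑ᶠ t ∈ {t : V | t ∈ affT G G' s ∧ t ≠ v}, (G'.sigmaV s t v : ℝ) / (G'.sigma s t : ℝ)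

end WDigraph

/-! By `mem_affS_iff`, `s` is an affected source of `t` exactly when some shortest `s`-`t` path
of `G'` uses the updated edge `(u, v)`: otherwise the shortest paths of `G'` and of `G` coincide.
Take such a path `q`. Its part after `v` is a path of `G`, so its weight is at least
`d(v, t) = d(v, y) + ω(y, t)`. Replacing that part by a shortest `v`-`y` path of `G` gives an
`s`-`y` walk of `G'` through `(u, v)` whose weight plus `ω(y, t)` is at most
`d'(s, t) ≤ d'(s, y) + ω(y, t)`. Hence the walk is a shortest `s`-`y` path of `G'`, and
`s ∈ S(y)`. -/

namespace WDigraph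

variable {V : Type*}

lemma pw_append_cons (G : WDigraph V) :
    ∀ (l : List V) (a : V) (m : List V), G.pw (l ++ a :: m) = G.pw (l ++ [a]) + G.pw (a :: m)
  | [], _, _ => by simp [pw]
  | [_], _, _ => by simp [pw]
  | b :: c :: l, a, m => by
    change G.w b c + G.pw (c :: l ++ a :: m) = G.w b c + G.pw (c :: l ++ [a]) + G.pw (a :: m)
    rw [pw_append_cons G (c :: l) a m]
    ring

lemma pw_append (G : WDigraph V) {p q : List V} {a b : V} (ha : p.getLast? = some a)
    (hb : q.head? = some b) : G.pw (p ++ q) = G.pw p + G.w a b + G.pw q := by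
  obtain ⟨p, rfl⟩ := List.getLast?_eq_some_iff.1 ha
  obtain ⟨q, rfl⟩ := List.head?_eq_some_iff.1 hb
  rw [List.append_assoc, List.singleton_append, pw_append_cons, add_assoc]
  rfl

lemma pw_nonneg {G : WDigraph V} : ∀ {p : List V}, p.IsChain G.E → 0 ≤ G.pw p
  | [], _ | [_], _ => le_rfl
  | a :: b :: _, hc => by
    obtain ⟨hab, hc⟩ := List.isChain_cons_cons.1 hc
    exact add_nonneg (G.pos a b hab).le (pw_nonneg hc)

lemma pw_pos {G : WDigraph V} {a b : V} {l : List V} (hc : (a :: b :: l).IsChain G.E) :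
    0 < G.pw (a :: b :: l) := by
  obtain ⟨hab, hc⟩ := List.isChain_cons_cons.1 hc
  exact add_pos_of_pos_of_nonneg (G.pos a b hab) (pw_nonneg hc)

section Comparison

variable {G H : WDigraph V}

lemma pw_le_pw_of_le : ∀ {p : List V},
    (∀ a b, [a, b] <:+: p → G.w a b ≤ H.w a b) → G.pw p ≤ H.pw p
  | [], _ | [_], _ => le_rfl
  | a :: b :: _, h => add_le_add (h a b (List.prefix_append _ _).isInfix)
      (pw_le_pw_of_le fun c d hcd => h c d (hcd.trans (List.suffix_cons _ _).isInfix))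

lemma pw_lt_pw_of_lt : ∀ {p : List V} {a b : V},
    (∀ c d, [c, d] <:+: p → G.w c d ≤ H.w c d) → [a, b] <:+: p → G.w a b < H.w a b →
    G.pw p < H.pw p
  | [], _, _, _, hab, _ | [_], _, _, _, hab, _ => by
    simpa using hab.length_le
  | c :: d :: l, a, b, h, hab, hlt => by
    have hle_tail : ∀ e f, [e, f] <:+: d :: l → G.w e f ≤ H.w e f := fun e f hef =>
      h e f (hef.trans (List.suffix_cons _ _).isInfix)
    have hcd := h c d (List.prefix_append _ _).isInfix
    rcases List.infix_cons_iff.1 hab with hpre | hinf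
    · obtain ⟨rfl, rfl⟩ : a = c ∧ b = d := by
        simp only [List.cons_prefix_cons] at hpre
        exact ⟨hpre.1, hpre.2.1⟩
      exact add_lt_add_of_lt_of_le hlt (pw_le_pw_of_le hle_tail)
    · exact add_lt_add_of_le_of_lt hcd (pw_lt_pw_of_lt hle_tail hinf hlt)

end Comparison

def IsWalk (G : WDigraph V) (s t : V) (p : List V) : Prop :=
  p.IsChain G.E ∧ p.head? = some s ∧ p.getLast? = some t

lemma IsPath.isWalk {G : WDigraph V} {s t : V} {p : List V} (hp : G.IsPath s t p) :
    G.IsWalk s t p :=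
  ⟨hp.1, hp.2.1, hp.2.2.1⟩

lemma IsWalk.isPath {G : WDigraph V} {s t : V} {p : List V} (hp : G.IsWalk s t p)
    (hnd : p.Nodup) : G.IsPath s t p :=
  ⟨hp.1, hp.2.1, hp.2.2, hnd⟩

lemma IsWalk.append {G : WDigraph V} {s t a b : V} {p q : List V} (hp : G.IsWalk s a p)
    (hab : G.E a b) (hq : G.IsWalk b t q) : G.IsWalk s t (p ++ q) := by
  obtain ⟨hpc, hps, hpa⟩ := hp
  obtain ⟨hqc, hqb, hqt⟩ := hq
  refine ⟨hpc.append hqc ?_, ?_, ?_⟩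
  · simp_all
  · simp [List.head?_append, hps]
  · simp [List.getLast?_append, hqt]

lemma IsPath.of_append {G : WDigraph V} {s t a b : V} {p q : List V}
    (h : G.IsPath s t (p ++ q)) (ha : p.getLast? = some a) (hb : q.head? = some b) :
    G.IsPath s a p ∧ G.E a b ∧ G.IsPath b t q := by
  obtain ⟨hc, hs, ht, hnd⟩ := h
  obtain ⟨hpc, hqc, hpq⟩ := List.isChain_append.1 hc
  obtain ⟨hpn, hqn, -⟩ := List.nodup_append.1 hnd
  have hp : p ≠ [] := by rintro rfl; simp at ha
  have hq : q ≠ [] := by rintro rfl; simp at hb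
  refine ⟨⟨hpc, ?_, ha, hpn⟩, hpq a ha b hb, ⟨hqc, hb, ?_, hqn⟩⟩
  · rwa [List.head?_append_of_ne_nil _ hp] at hs
  · rwa [List.getLast?_append_of_ne_nil _ hq] at ht

lemma _root_.List.exists_eq_append_cons_append_cons_of_not_nodup {α : Type*} {l : List α}
    (h : ¬ l.Nodup) : ∃ (x : α) (l₁ l₂ l₃ : List α), l = l₁ ++ x :: l₂ ++ x :: l₃ := by
  induction l with
  | nil => simp at h
  | cons a l ih =>
    by_cases ha : a ∈ l
    · obtain ⟨l₂, l₃, rfl⟩ := List.append_of_mem ha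
      exact ⟨a, [], l₂, l₃, rfl⟩
    · obtain ⟨x, l₁, l₂, l₃, rfl⟩ := ih (by simpa [ha] using h)
      exact ⟨x, a :: l₁, l₂, l₃, rfl⟩

lemma IsWalk.exists_shorter_of_not_nodup {G : WDigraph V} {s t : V} {p : List V}
    (hp : G.IsWalk s t p) (hnd : ¬ p.Nodup) :
    ∃ p', G.IsWalk s t p' ∧ p'.length < p.length ∧ G.pw p' < G.pw p := by
  obtain ⟨x, l₁, l₂, l₃, rfl⟩ := List.exists_eq_append_cons_append_cons_of_not_nodup hnd
  obtain ⟨hc, hs, ht⟩ := hp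
  refine ⟨l₁ ++ x :: l₃, ⟨?_, ?_, ?_⟩, by simp, ?_⟩
  · have hpre : (l₁ ++ [x]).IsChain G.E := hc.prefix ⟨l₂ ++ x :: l₃, by simp⟩
    have hsuf : ([x] ++ l₃).IsChain G.E := hc.suffix ⟨l₁ ++ x :: l₂, by simp⟩
    simpa using hpre.append_overlap hsuf (List.cons_ne_nil x [])
  · cases l₁ <;> simpa using hs
  · rw [List.getLast?_append_cons]
    rwa [List.getLast?_append_cons] at ht
  · -- the removed cycle `x :: l₂ ++ [x]` has positive weight
    have hcyc : (x :: (l₂ ++ [x])).IsChain G.E := hc.infix ⟨l₁, l₃, by simp⟩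
    obtain ⟨y, l₂', hl₂⟩ : ∃ y l₂', l₂ ++ [x] = y :: l₂' := by cases l₂ <;> simp
    have hpos : 0 < G.pw (x :: (l₂ ++ [x])) := hl₂ ▸ pw_pos (hl₂ ▸ hcyc)
    have hsplit : G.pw (x :: (l₂ ++ x :: l₃)) = G.pw (x :: (l₂ ++ [x])) + G.pw (x :: l₃) := by
      simpa using pw_append_cons G (x :: l₂) x l₃
    rw [List.append_assoc, List.cons_append, pw_append_cons G l₁ x (l₂ ++ x :: l₃), hsplit,
      pw_append_cons G l₁ x l₃]
    linarith

lemma IsPath.dist_le_pw {G : WDigraph V} {s t : V} {p : List V} (hp : G.IsPath s t p) :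
    G.dist s t ≤ G.pw p :=
  sInf_le ⟨p, hp, rfl⟩

lemma IsWalk.dist_le_pw {G : WDigraph V} {s t : V} {p : List V} (hp : G.IsWalk s t p) :
    G.dist s t ≤ G.pw p := by
  induction hl : p.length using Nat.strong_induction_on generalizing p with
  | _ n ih =>
    by_cases hnd : p.Nodup
    · exact (hp.isPath hnd).dist_le_pw
    · obtain ⟨p', hp', hlen, hpw⟩ := hp.exists_shorter_of_not_nodup hnd
      exact (ih _ (hl ▸ hlen) hp' rfl).trans (EReal.coe_le_coe_iff.2 hpw.le)

lemma IsWalk.mem_SP_of_pw_le_dist {G : WDigraph V} {s t : V} {p : List V}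
    (hp : G.IsWalk s t p) (h : (G.pw p : EReal) ≤ G.dist s t) : p ∈ G.SP s t := by
  have hnd : p.Nodup := by
    by_contra hnd
    obtain ⟨p', hp', -, hpw⟩ := hp.exists_shorter_of_not_nodup hnd
    exact (h.trans hp'.dist_le_pw).not_gt (EReal.coe_lt_coe_iff.2 hpw)
  exact ⟨hp.isPath hnd, h.antisymm hp.dist_le_pw⟩

lemma dist_le_pw_add {G : WDigraph V} {s y t : V} {p : List V} (hp : G.IsWalk s y p)
    (hyt : G.E y t) : G.dist s t ≤ ((G.pw p + G.w y t : ℝ) : EReal) := by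
  have hpt : G.IsWalk s t (p ++ [t]) := hp.append hyt ⟨List.isChain_singleton t, rfl, rfl⟩
  simpa [G.pw_append hp.2.2 (rfl : [t].head? = some t), pw] using hpt.dist_le_pw

section Finite

variable [Fintype V]

lemma isPath_finite (G : WDigraph V) (s t : V) : {p | G.IsPath s t p}.Finite :=
  (List.finite_length_le V (Fintype.card V)).subset fun _ hp => hp.2.2.2.length_le_card

lemma SP_finite (G : WDigraph V) (s t : V) : (G.SP s t).Finite :=
  (G.isPath_finite s t).subset fun _ hp => hp.1

lemma exists_mem_SP {G : WDigraph V} {s t : V} (h : G.dist s t < ⊤) :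
    ∃ p, p ∈ G.SP s t := by
  rcases {p | G.IsPath s t p}.eq_empty_or_nonempty with hne | hne
  · simp [dist, hne] at h
  · obtain ⟨p, hp, hpw⟩ := (hne.image fun p => (G.pw p : EReal)).csInf_mem ((G.isPath_finite s t).image _)
    exact ⟨p, hp, hpw⟩

end Finite

lemma dist_lt_top_of_mem_pred {G : WDigraph V} {s t y : V} (hy : y ∈ G.pred s t) :
    G.dist s y < ⊤ := by
  obtain ⟨-, hsum, htop⟩ := hy
  refine lt_top_iff_ne_top.2 fun hy_top => htop.ne ?_
  rw [← hsum, hy_top, EReal.top_add_coe]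

lemma not_infix_of_isPath {H : WDigraph V} {u v t : V} {p : List V} (hp : H.IsPath v t p) :
    ¬ [u, v] <:+: p := by
  obtain ⟨z, rfl⟩ := List.head?_eq_some_iff.1 hp.2.1
  have hvz : v ∉ z := (List.nodup_cons.1 hp.2.2.2).1
  intro huv
  rcases List.infix_cons_iff.1 huv with hpre | hinf
  · exact hvz ((List.cons_prefix_cons.1 hpre).2.subset (List.mem_singleton_self v))
  · exact hvz (hinf.subset (by simp))

namespace IsUpdate

variable {G G' : WDigraph V} {u v : V}

lemma E'_of_E (h : IsUpdate G G' u v) {a b : V} (hab : G.E a b) : G'.E a b :=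
  (h.edge_iff a b).2 (Or.inl hab)

lemma isWalk'_of_isWalk (h : IsUpdate G G' u v) {s t : V} {p : List V} (hp : G.IsWalk s t p) :
    G'.IsWalk s t p :=
  ⟨hp.1.imp fun _ _ => h.E'_of_E, hp.2⟩

lemma w'_le_w (h : IsUpdate G G' u v) {a b : V} (hab : G.E a b) : G'.w a b ≤ G.w a b := by
  by_cases huv : a = u ∧ b = v
  · obtain ⟨rfl, rfl⟩ := huv
    rcases h.insert_or_decrease with hnot | ⟨-, hlt⟩
    · exact absurd hab hnot
    · exact hlt.le
  · exact (h.weight_eq a b huv).le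

lemma pw'_eq_pw (h : IsUpdate G G' u v) {p : List V} (hp : ¬ [u, v] <:+: p) :
    G'.pw p = G.pw p :=
  have hw : ∀ a b, [a, b] <:+: p → G'.w a b = G.w a b := fun a b hab =>
    h.weight_eq a b fun ⟨hau, hbv⟩ => hp (hau ▸ hbv ▸ hab)
  le_antisymm (pw_le_pw_of_le fun a b hab => (hw a b hab).le)
    (pw_le_pw_of_le fun a b hab => (hw a b hab).ge)

lemma pw'_le_pw (h : IsUpdate G G' u v) {p : List V} (hc : p.IsChain G.E) : G'.pw p ≤ G.pw p :=
  pw_le_pw_of_le fun _ _ hab => h.w'_le_w (List.isChain_pair.1 (hc.infix hab))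

lemma pw'_lt_pw (h : IsUpdate G G' u v) {p : List V} (hc : p.IsChain G.E) (hp : [u, v] <:+: p) :
    G'.pw p < G.pw p := by
  rcases h.insert_or_decrease with hnot | ⟨-, hlt⟩
  · exact absurd ((List.isChain_pair.1 (hc.infix hp))) hnot
  · exact pw_lt_pw_of_lt (fun _ _ hab => h.w'_le_w (List.isChain_pair.1 (hc.infix hab))) hp hlt

lemma isPath_of_not_infix (h : IsUpdate G G' u v) {s t : V} {p : List V} (hp : G'.IsPath s t p)
    (huv : ¬ [u, v] <:+: p) : G.IsPath s t p := by
  refine ⟨List.isChain_iff_forall_rel_of_append_cons_cons.2 fun a b l₁ l₂ hl => ?_, hp.2⟩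
  have hab : [a, b] <:+: p := ⟨l₁, l₂, by simp [hl]⟩
  have hab' : G'.E a b := List.isChain_iff_forall_rel_of_append_cons_cons.1 hp.1 hl
  rcases (h.edge_iff a b).1 hab' with hab' | ⟨rfl, rfl⟩
  · exact hab'
  · exact absurd hab huv

lemma SP_subset_SP' (h : IsUpdate G G' u v) {s t : V} (hd : G'.dist s t = G.dist s t) :
    G.SP s t ⊆ G'.SP s t := fun _ ⟨hp, hpw⟩ =>
  (h.isWalk'_of_isWalk hp.isWalk).mem_SP_of_pw_le_dist <|
    (EReal.coe_le_coe_iff.2 (h.pw'_le_pw hp.1)).trans (hpw.trans hd.symm).le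

variable [Fintype V]

lemma dist'_le_dist (h : IsUpdate G G' u v) (s t : V) : G'.dist s t ≤ G.dist s t := by
  rcases eq_top_or_lt_top (G.dist s t) with hd | hd
  · exact hd ▸ le_top
  · obtain ⟨p, hp, hpw⟩ := exists_mem_SP hd
    calc G'.dist s t ≤ G'.pw p := (h.isWalk'_of_isWalk hp.isWalk).dist_le_pw
      _ ≤ G.pw p := EReal.coe_le_coe_iff.2 (h.pw'_le_pw hp.1)
      _ = G.dist s t := hpw

lemma mem_affS_iff (h : IsUpdate G G' u v) {s t : V} :
    s ∈ affS G G' t ↔ ∃ q ∈ G'.SP s t, [u, v] <:+: q := by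
  constructor
  · intro hs
    by_contra! hnone
    have hG : ∀ q ∈ G'.SP s t, G.IsPath s t q ∧ (G.pw q : EReal) = G'.dist s t := fun q hq =>
      ⟨h.isPath_of_not_infix hq.1 (hnone q hq), by rw [← h.pw'_eq_pw (hnone q hq), hq.2]⟩
    have hd : G'.dist s t = G.dist s t := by
      refine (h.dist'_le_dist s t).antisymm (not_lt.1 fun hlt => ?_)
      obtain ⟨q, hq⟩ := exists_mem_SP (hlt.trans_le le_top)
      exact hlt.not_ge ((hG q hq).2 ▸ (hG q hq).1.dist_le_pw)
    refine hs.elim (fun hlt => hlt.ne hd) fun hσ => hσ ?_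
    rw [sigma, sigma, (h.SP_subset_SP' hd).antisymm fun q hq => ⟨(hG q hq).1, (hG q hq).2.trans hd⟩]
  · rintro ⟨q, hq, huv⟩
    rcases (h.dist'_le_dist s t).lt_or_eq with hlt | hd
    · exact Or.inl hlt
    · have hq_new : q ∉ G.SP s t := fun hqG => by
        have hpw : (G'.pw q : EReal) = G.pw q := by rw [hq.2, hd, hqG.2]
        exact (h.pw'_lt_pw hqG.1.1 huv).ne (EReal.coe_eq_coe_iff.1 hpw)
      have hss : G.SP s t ⊂ G'.SP s t :=
        (h.SP_subset_SP' hd).ssubset_of_ne fun he => hq_new (he ▸ hq)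
      exact Or.inr (Set.ncard_lt_ncard hss (G'.SP_finite s t)).ne

end IsUpdate

variable [Fintype V] [DecidableEq V]

/-- Let `t ∈ V` and let `y ∈ P_v(t)` be a predecessor of `t` with
respect to source `v` in `G`. Then `S(t) ⊆ S(y)`: every affected source of `t`
is also an affected source of `y`. -/
theorem affS_subset_of_pred (G G' : WDigraph V) (u v : V)
    (h : IsUpdate G G' u v) (t y : V) (hy : y ∈ G.pred v t) :
    affS G G' t ⊆ affS G G' y := by
  obtain ⟨r, hr, hr_pw⟩ := exists_mem_SP (dist_lt_top_of_mem_pred hy)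
  obtain ⟨hyt, hvt, -⟩ := hy
  obtain ⟨r, rfl⟩ := List.head?_eq_some_iff.1 hr.2.1
  intro s hs
  obtain ⟨q, hq, ⟨x, z, rfl⟩⟩ := h.mem_affS_iff.1 hs
  obtain ⟨hq, hq_pw⟩ : x ++ [u] ++ v :: z ∈ G'.SP s t := by simpa using hq
  obtain ⟨hx, -, hz⟩ := hq.of_append (List.getLast?_concat ..) rfl
  have hc : G'.IsWalk s y (x ++ [u] ++ v :: r) :=
    hx.isWalk.append h.edge' (h.isWalk'_of_isWalk hr.isWalk)
  have hrz : G.pw (v :: r) + G.w y t ≤ G'.pw (v :: z) := by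
    have := (h.isPath_of_not_infix hz (not_infix_of_isPath hz)).dist_le_pw
    rw [← hvt, ← hr_pw] at this
    rw [h.pw'_eq_pw (not_infix_of_isPath hz)]
    exact_mod_cast this
  obtain ⟨m, hm, hm_pw⟩ := exists_mem_SP (hc.dist_le_pw.trans_lt (EReal.coe_lt_top _))
  have hqm : G'.pw (x ++ [u] ++ v :: z) ≤ G'.pw m + G.w y t := by
    have := dist_le_pw_add hm.isWalk (h.E'_of_E hyt)
    rw [← hq_pw] at this
    linarith [h.w'_le_w hyt, EReal.coe_le_coe_iff.1 this]
  refine h.mem_affS_iff.2 ⟨_, hc.mem_SP_of_pw_le_dist ?_, x, r, by simp⟩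
  rw [← hm_pw, EReal.coe_le_coe_iff]
  rw [G'.pw_append (List.getLast?_concat ..) rfl] at hqm ⊢
  rw [h.pw'_eq_pw (not_infix_of_isPath hr)]
  linarith

end WDigraph
end

section
/- Distances and shortest-path counts into u and out of v are not affected by the update: for every s ∈ V, d'(s,u) = d(s,u) and σ'_{su} = σ_{su}, and for every t ∈ V, d'(v,t) = d(v,t) and σ'_{vt} = σ_{vt}. -/
/-! A simple path ending at `u`, or starting at `v`, cannot traverse the updated edge `(u,v)`:
that would visit `u` (resp. `v`) twice. The update changes nothing on paths avoiding `(u,v)`, so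
the `s`-`u` and `v`-`t` paths of `G` and `G'` are the same lists with the same weights. -/

open scoped BigOperators

theorem List.Nodup.not_pair_infix_of_getLast? {α : Type*} {l : List α} {a b : α}
    (hl : l.Nodup) (hlast : l.getLast? = some a) : ¬ [a, b] <:+: l := by
  rintro ⟨s, t, rfl⟩
  rw [show s ++ [a, b] ++ t = (s ++ [a]) ++ (b :: t) by simp] at hl hlast
  rw [List.getLast?_append_of_ne_nil _ (List.cons_ne_nil b t)] at hlast
  exact (List.nodup_append.mp hl).2.2 a (by simp) a (List.mem_of_getLast? hlast) rfl

theorem List.Nodup.not_pair_infix_of_head? {α : Type*} {l : List α} {a b : α}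
    (hl : l.Nodup) (hhead : l.head? = some b) : ¬ [a, b] <:+: l := by
  rw [← List.reverse_infix]
  exact (List.nodup_reverse.mpr hl).not_pair_infix_of_getLast? (List.getLast?_reverse ▸ hhead)

theorem List.not_pair_infix_cons_cons {α : Type*} {u v a b : α} {r : List α}
    (h : ¬ [u, v] <:+: a :: b :: r) : ¬ (a = u ∧ b = v) ∧ ¬ [u, v] <:+: b :: r := by
  simp only [List.infix_cons_iff (l₂ := b :: r), List.cons_prefix_cons, List.nil_prefix,
    and_true, not_or] at h
  exact ⟨fun ⟨hau, hbv⟩ => h.1 ⟨hau.symm, hbv.symm⟩, h.2⟩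

namespace WDigraph

variable {V : Type*}

namespace IsUpdate

variable {G G' : WDigraph V} {u v : V}

theorem edge_iff_of_ne (h : IsUpdate G G' u v) {a b : V} (hab : ¬ (a = u ∧ b = v)) :
    G'.E a b ↔ G.E a b := by
  rw [h.edge_iff, or_iff_left hab]

theorem isChain_iff_of_not_infix (h : IsUpdate G G' u v) :
    ∀ {p : List V}, ¬ [u, v] <:+: p → (List.IsChain G'.E p ↔ List.IsChain G.E p)
  | [], _ => by simp
  | [_], _ => by simp
  | a :: b :: r, hp => by
    obtain ⟨hab, hr⟩ := List.not_pair_infix_cons_cons hp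
    rw [List.isChain_cons_cons, List.isChain_cons_cons, h.edge_iff_of_ne hab,
      h.isChain_iff_of_not_infix hr]

theorem pw_eq_of_not_infix (h : IsUpdate G G' u v) :
    ∀ {p : List V}, ¬ [u, v] <:+: p → G'.pw p = G.pw p
  | [], _ => rfl
  | [_], _ => rfl
  | a :: b :: r, hp => by
    obtain ⟨hab, hr⟩ := List.not_pair_infix_cons_cons hp
    simp only [pw]
    rw [h.weight_eq a b hab, h.pw_eq_of_not_infix hr]

end IsUpdate

theorem dist_eq_and_sigma_eq_of_isPath_iff {G G' : WDigraph V} {s t : V}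
    (hpath : ∀ p, G'.IsPath s t p ↔ G.IsPath s t p)
    (hpw : ∀ p, G.IsPath s t p → G'.pw p = G.pw p) :
    G'.dist s t = G.dist s t ∧ G'.sigma s t = G.sigma s t := by
  have hdist : G'.dist s t = G.dist s t := by
    unfold dist
    simp only [hpath]
    exact congrArg sInf (Set.image_congr fun p hp => by rw [hpw p hp])
  refine ⟨hdist, congrArg Set.ncard (Set.ext fun p => ?_)⟩
  simp only [SP, Set.mem_ofPred_eq, hpath, hdist]
  exact and_congr_right fun hp => by rw [hpw p hp]

theorem IsUpdate.dist_eq_and_sigma_eq {G G' : WDigraph V} {u v s t : V}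
    (h : IsUpdate G G' u v)
    (havoid : ∀ p : List V, p.Nodup → p.head? = some s → p.getLast? = some t → ¬ [u, v] <:+: p) :
    G'.dist s t = G.dist s t ∧ G'.sigma s t = G.sigma s t := by
  have hpath : ∀ p, G'.IsPath s t p ↔ G.IsPath s t p := fun p =>
    and_congr_left fun ⟨hs, ht, hnd⟩ => h.isChain_iff_of_not_infix (havoid p hnd hs ht)
  exact dist_eq_and_sigma_eq_of_isPath_iff hpath
    fun p ⟨_, hs, ht, hnd⟩ => h.pw_eq_of_not_infix (havoid p hnd hs ht)

variable [Fintype V] [DecidableEq V]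

/-- Distances and shortest-path counts into `u` and out of `v` are
not affected by the update: for every `s ∈ V`, `d'(s,u) = d(s,u)` and
`σ'_{su} = σ_{su}`; and for every `t ∈ V`, `d'(v,t) = d(v,t)` and `σ'_{vt} = σ_{vt}`. -/
theorem dist_sigma_unaffected (G G' : WDigraph V) (u v : V)
    (h : IsUpdate G G' u v) :
    (∀ s : V, G'.dist s u = G.dist s u ∧ G'.sigma s u = G.sigma s u) ∧
      (∀ t : V, G'.dist v t = G.dist v t ∧ G'.sigma v t = G.sigma v t) :=
  ⟨fun _ => h.dist_eq_and_sigma_eq fun _ hnd _ hlast => hnd.not_pair_infix_of_getLast? hlast,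
    fun _ => h.dist_eq_and_sigma_eq fun _ hnd hhead _ => hnd.not_pair_infix_of_head? hhead⟩

end WDigraph
end
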